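/- Naive KAM abstract-time overhead explosion: define tn := C0⟨C1⟨⋯Cn⟨λy.I⟩⋯⟩⟩ I. For every n ∈ ℕ, the complete weak-head evaluation of tn has Θ(n) β-steps, while the complete Naive KAM run from the initial state (tn, ε, ε) contains a state whose closure count is at least 2^n; hence both the space and the low-level time of the Naive KAM run are Ω(2^n), i.e. at least exponential in the number of β-steps. -/

import Mathlib

set_option autoImplicit false

/-! λ-terms with variable names in ℕ. -/
inductive Term : Type
  | var : ℕ → Term
  | lam : ℕ → Term → Term
  | app : Term → Term → Term
deriving DecidableEq

namespace Term

/-- Free variables. -/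
def fv : Term → Finset ℕ
  | var x => {x}
  | lam x t => fv t \ {x}
  | app t u => fv t ∪ fv u

/-- A term is closed if it has no free variables. -/
def closed (t : Term) : Prop := t.fv = ∅

/-- Substitution of `u` for the free occurrences of `x`; it is capture-avoiding
whenever the substituted term `u` is closed, which is the only case arising in
Closed Call-by-Name. -/
def subst (x : ℕ) (u : Term) : Term → Term
  | var y => if y = x then u else var y
  | lam y t => if y = x then lam y t else lam y (subst x u t)
  | app t r => app (subst x u t) (subst x u r)

/-- In-order (left-to-right) enumeration of the constructors (as subterm occurrences). -/
def inorder : Term → List Term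
  | var x => [var x]
  | lam x t => lam x t :: inorder t
  | app t u => inorder t ++ app t u :: inorder u

/-- Membership in the deterministic λ-calculus `Λdet`: the right subterm of every
application is a variable or an abstraction. -/
def IsDet : Term → Prop
  | var _ => True
  | lam _ t => IsDet t
  | app t u => IsDet t ∧ IsDet u ∧ ((∃ x, u = var x) ∨ ∃ x r, u = lam x r)

end Term

/-- Weak head reduction: `(λx.t) u r1 … rh →wh t{x:=u} r1 … rh`. -/
inductive Whr : Term → Term → Prop
  | beta (x : ℕ) (t u : Term) : Whr (Term.app (Term.lam x t) u) (Term.subst x u t)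
  | appL {t t' : Term} (u : Term) : Whr t t' → Whr (Term.app t u) (Term.app t' u)

def WhNormal (t : Term) : Prop := ∀ u, ¬ Whr t u

/-- `NSteps R n a b`: exactly `n` `R`-steps from `a` to `b`. -/
inductive NSteps {α : Type _} (R : α → α → Prop) : ℕ → α → α → Prop
  | refl (a : α) : NSteps R 0 a a
  | head {a b c : α} {n : ℕ} : R a b → NSteps R n b c → NSteps R (n + 1) a c

/-! Closures and (local) environments. -/
mutual
  inductive Clo : Type
    | mk : Term → Env → Clo
  inductive Env : Type
    | nil : Env
    | cons : ℕ → Clo → Env → Env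
end

def Env.lookup : Env → ℕ → Option Clo
  | .nil, _ => none
  | .cons y c e, x => if y = x then some c else Env.lookup e x

def Env.dom : Env → Finset ℕ
  | .nil => ∅
  | .cons x _ e => insert x (Env.dom e)

/-- Restriction `e|s` of an environment to a set of variables. -/
def Env.restrict : Env → Finset ℕ → Env
  | .nil, _ => .nil
  | .cons x c e, s => if x ∈ s then .cons x c (Env.restrict e s) else Env.restrict e s

mutual
  /-- Decoding of a closure into a λ-term. -/
  def Clo.decode : Clo → Term
    | .mk t e => Env.decode t e
  /-- Decoding: `(t, ε)↓ = t`, `(t, [x←c]·e)↓ = (t{x:=c↓}, e)↓`. -/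
  def Env.decode : Term → Env → Term
    | t, .nil => t
    | t, .cons x c e => Env.decode (Term.subst x (Clo.decode c) t) e
end

mutual
  /-- Hereditary number of closures in a closure (without sharing). -/
  def Clo.count : Clo → ℕ
    | .mk _ e => 1 + Env.count e
  def Env.count : Env → ℕ
    | .nil => 0
    | .cons _ c e => Clo.count c + Env.count e
end

mutual
  /-- A closure `(t,e)` is closed: `fv t ⊆ dom e` and hereditarily so. -/
  def Clo.Closed : Clo → Prop
    | .mk t e => t.fv ⊆ e.dom ∧ Env.ClosedE e
  def Env.ClosedE : Env → Prop
    | .nil => True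
    | .cons _ c e => Clo.Closed c ∧ Env.ClosedE e
end

mutual
  /-- Environment domain invariant: `dom e = fv t`, hereditarily. -/
  def Clo.DomInv : Clo → Prop
    | .mk t e => e.dom = t.fv ∧ Env.DomInvE e
  def Env.DomInvE : Env → Prop
    | .nil => True
    | .cons _ c e => Clo.DomInv c ∧ Env.DomInvE e
end

/-- Size of the left address of (the first occurrence of) `u` in the code `t0`:
the binary length of its index in the in-order enumeration of the constructors of `t0`. -/
def addrSize (t0 u : Term) : ℕ := Nat.size (t0.inorder.idxOf u)

mutual
  /-- Size of a closure, relative to the initial code `t0`. -/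
  def Clo.size : Term → Clo → ℕ
    | t0, .mk u e => addrSize t0 u + Env.sizeE t0 e
  /-- Size of an environment, relative to the initial code `t0`. -/
  def Env.sizeE : Term → Env → ℕ
    | _, .nil => 0
    | t0, .cons x c e => addrSize t0 (Term.var x) + Clo.size t0 c + Env.sizeE t0 e
end

def stackSize (t0 : Term) (S : List Clo) : ℕ := (S.map (Clo.size t0)).sum

/-- States of the (Naive/Space) KAM. -/
structure State where
  tm : Term
  env : Env
  stk : List Clo

/-- Size of a state, relative to the initial code `t0`. -/
def State.size (t0 : Term) (s : State) : ℕ :=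
  addrSize t0 s.tm + Env.sizeE t0 s.env + stackSize t0 s.stk

/-- Closure count of a state: total number of closures occurring in it,
hereditarily and without sharing (the active term/environment pair is a closure). -/
def State.count (s : State) : ℕ :=
  1 + Env.count s.env + (s.stk.map Clo.count).sum

def State.decode (s : State) : Term :=
  s.stk.foldl (fun a c => Term.app a c.decode) (Env.decode s.tm s.env)

def initState (t : Term) : State := ⟨t, .nil, []⟩

/-! The Naive KAM. -/
inductive NK : State → State → Prop
  | sea (t u : Term) (e : Env) (S : List Clo) :
      NK ⟨.app t u, e, S⟩ ⟨t, e, .mk u e :: S⟩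
  | beta (x : ℕ) (t : Term) (e : Env) (c : Clo) (S : List Clo) :
      NK ⟨.lam x t, e, c :: S⟩ ⟨t, .cons x c e, S⟩
  | sub {x : ℕ} {e : Env} {u : Term} {e' : Env} (S : List Clo) :
      Env.lookup e x = some (.mk u e') → NK ⟨.var x, e, S⟩ ⟨u, e', S⟩

def NKFinal (s : State) : Prop := ∀ s', ¬ NK s s'

/-- Naive KAM runs counting the number of β-transitions. -/
inductive NKRun : ℕ → State → State → Prop
  | refl (s : State) : NKRun 0 s s
  | sea {t u : Term} {e : Env} {S : List Clo} {s' : State} {n : ℕ} :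
      NKRun n ⟨t, e, .mk u e :: S⟩ s' → NKRun n ⟨.app t u, e, S⟩ s'
  | beta {x : ℕ} {t : Term} {e : Env} {c : Clo} {S : List Clo} {s' : State} {n : ℕ} :
      NKRun n ⟨t, .cons x c e, S⟩ s' → NKRun (n + 1) ⟨.lam x t, e, c :: S⟩ s'
  | sub {x : ℕ} {e : Env} {u : Term} {e' : Env} {S : List Clo} {s' : State} {n : ℕ} :
      Env.lookup e x = some (.mk u e') → NKRun n ⟨u, e', S⟩ s' → NKRun n ⟨.var x, e, S⟩ s'

/-! The Space KAM. -/
inductive SK : State → State → Prop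
  | seav {t : Term} {x : ℕ} {e : Env} {c : Clo} (S : List Clo) :
      Env.lookup e x = some c →
      SK ⟨.app t (.var x), e, S⟩ ⟨t, e.restrict t.fv, c :: S⟩
  | seanv {t u : Term} {e : Env} (S : List Clo) :
      (∀ x, u ≠ .var x) →
      SK ⟨.app t u, e, S⟩ ⟨t, e.restrict t.fv, .mk u (e.restrict u.fv) :: S⟩
  | betaw {x : ℕ} {t : Term} {e : Env} (c : Clo) (S : List Clo) :
      x ∉ t.fv → SK ⟨.lam x t, e, c :: S⟩ ⟨t, e, S⟩
  | betanw {x : ℕ} {t : Term} {e : Env} (c : Clo) (S : List Clo) :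
      x ∈ t.fv → SK ⟨.lam x t, e, c :: S⟩ ⟨t, .cons x c e, S⟩
  | sub {x : ℕ} {e : Env} {u : Term} {e' : Env} (S : List Clo) :
      Env.lookup e x = some (.mk u e') → SK ⟨.var x, e, S⟩ ⟨u, e', S⟩

def SKFinal (s : State) : Prop := ∀ s', ¬ SK s s'

/-- Space KAM runs counting the number of β-transitions (`→βw` and `→β¬w`). -/
inductive SKRun : ℕ → State → State → Prop
  | refl (s : State) : SKRun 0 s s
  | seav {t : Term} {x : ℕ} {e : Env} {c : Clo} {S : List Clo} {s' : State} {n : ℕ} :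
      Env.lookup e x = some c →
      SKRun n ⟨t, e.restrict t.fv, c :: S⟩ s' → SKRun n ⟨.app t (.var x), e, S⟩ s'
  | seanv {t u : Term} {e : Env} {S : List Clo} {s' : State} {n : ℕ} :
      (∀ x, u ≠ .var x) →
      SKRun n ⟨t, e.restrict t.fv, .mk u (e.restrict u.fv) :: S⟩ s' →
      SKRun n ⟨.app t u, e, S⟩ s'
  | betaw {x : ℕ} {t : Term} {e : Env} {c : Clo} {S : List Clo} {s' : State} {n : ℕ} :
      x ∉ t.fv → SKRun n ⟨t, e, S⟩ s' → SKRun (n + 1) ⟨.lam x t, e, c :: S⟩ s'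
  | betanw {x : ℕ} {t : Term} {e : Env} {c : Clo} {S : List Clo} {s' : State} {n : ℕ} :
      x ∈ t.fv → SKRun n ⟨t, .cons x c e, S⟩ s' → SKRun (n + 1) ⟨.lam x t, e, c :: S⟩ s'
  | sub {x : ℕ} {e : Env} {u : Term} {e' : Env} {S : List Clo} {s' : State} {n : ℕ} :
      Env.lookup e x = some (.mk u e') → SKRun n ⟨u, e', S⟩ s' → SKRun n ⟨.var x, e, S⟩ s'

/-! Concrete combinators. -/

/-- I := λx.x -/
def tmI : Term := .lam 0 (.var 0)
/-- θ := λx.λy.y (x x y)  (variables: x := 0, y := 1) -/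
def tmTheta : Term := .lam 0 (.lam 1 (.app (.var 1) (.app (.app (.var 0) (.var 0)) (.var 1))))
/-- fix := θ θ -/
def tmFix : Term := .app tmTheta tmTheta
/-- x x y -/
def xxy : Term := .app (.app (.var 0) (.var 0)) (.var 1)
/-- toyaux := λf.λz. z f f I  (f := 3, z := 2) -/
def tmToyaux : Term := .lam 3 (.lam 2 (.app (.app (.app (.var 2) (.var 3)) (.var 3)) tmI))
/-- toy := fix toyaux -/
def tmToy : Term := .app tmFix tmToyaux

/-- Scott encoding of binary strings (false = 0, true = 1; x0 := 4, x1 := 5, xε := 6):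
`⟨ε⟩ := λx0.λx1.λxε.xε`, `⟨b·r⟩ := λx0.λx1.λxε.xb ⟨r⟩`. -/
def encStr : List Bool → Term
  | [] => .lam 4 (.lam 5 (.lam 6 (.var 6)))
  | b :: r => .lam 4 (.lam 5 (.lam 6 (.app (.var (if b then 5 else 4)) (encStr r))))

/-- A variable fresh for `t`. -/
def freshVar (t : Term) : ℕ := t.fv.sup id + 1

/-- η-expansion: `η(t) := λx. t x` with `x ∉ fv t`. -/
def Term.eta (t : Term) : Term := .lam (freshVar t) (.app t (.var (freshVar t)))

/-- n-fold η-expansion. -/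
def etaN (n : ℕ) (t : Term) : Term := Term.eta^[n] t

/-! Environment families for the Naive KAM scrolling invariant
(variables: x := 0, y := 1, z := 2, f := 3, x0 := 4, x1 := 5, xε := 6). -/

/-- `e0 := [x←(θ,ε)]·[y←(toyaux,ε)]`, `e(i+1) := [x←(x,ei)]·[y←(y,ei)]`. -/
def eE : ℕ → Env
  | 0 => .cons 0 (.mk tmTheta .nil) (.cons 1 (.mk tmToyaux .nil) .nil)
  | i + 1 => .cons 0 (.mk (.var 0) (eE i)) (.cons 1 (.mk (.var 1) (eE i)) .nil)

/-- `e″0 := ε`, `e″(i+1) := [xε←(I,e′i)]·[x1←(f,e′i)]·[x0←(f,e′i)]·e″i`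
(with `e′i` inlined). -/
def eDD (s : List Bool) : ℕ → Env
  | 0 => .nil
  | i + 1 =>
    let ep : Env := .cons 2 (.mk (encStr (s.drop i)) (eDD s i)) (.cons 3 (.mk xxy (eE i)) .nil)
    .cons 6 (.mk tmI ep) (.cons 5 (.mk (.var 3) ep) (.cons 4 (.mk (.var 3) ep) (eDD s i)))

/-- `e′i := [z←(⟨b(i+1)⋯bn⟩, e″i)]·[f←(x x y, ei)]`. -/
def eP (s : List Bool) (i : ℕ) : Env :=
  .cons 2 (.mk (encStr (s.drop i)) (eDD s i)) (.cons 3 (.mk xxy (eE i)) .nil)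

/-! The family `tn` for the abstract-time overhead explosion
(variables `xi := i`). -/

/-- `x0 x1 ⋯ xn`. -/
def varsApp : ℕ → Term
  | 0 => .var 0
  | n + 1 => .app (varsApp n) (.var (n + 1))

/-- Term component of `Sn`: `x0 x0` for `n = 0`, `x0 ⋯ xn` for `n ≥ 1`. -/
def sTerm : ℕ → Term
  | 0 => .app (.var 0) (.var 0)
  | n + 1 => varsApp (n + 1)

/-- `e0 := [x0←(I,ε)]`, `e(n+1) := [x(n+1)←Sn]·en`. -/
def eN : ℕ → Env
  | 0 => .cons 0 (.mk tmI .nil) .nil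
  | n + 1 => .cons (n + 1) (.mk (sTerm n) (eN n)) (eN n)

/-- `Sn := (sTerm n, en)`. -/
def sClo (n : ℕ) : Clo := .mk (sTerm n) (eN n)

/-- `Ci⟨t⟩ := λxi. t (x0 ⋯ xi)` (with `C0⟨t⟩ = λx0. t (x0 x0)`). -/
def cPlug (i : ℕ) (t : Term) : Term := .lam i (.app t (sTerm i))

/-- `C0⟨C1⟨⋯Cn⟨t⟩⋯⟩⟩`. -/
def nest (n : ℕ) (t : Term) : Term := (List.range (n + 1)).foldr cPlug t

/-- `tn := C0⟨C1⟨⋯Cn⟨λy.I⟩⋯⟩⟩ I`. -/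
def tN (n : ℕ) : Term := .app (nest n (.lam 1 tmI)) tmI

/-! Global-copy scrolling terms (s′ := 7, z := 2, x := 0, f := 3). -/

/-- `λf.λs′. s′ f f z` (free variable z). -/
def tScroll : Term :=
  .lam 3 (.lam 7 (.app (.app (.app (.var 7) (.var 3)) (.var 3)) (.var 2)))

/-- `glCpy := λx.( fix (λf.λs′. s′ f f x) ) x`. -/
def glCpy : Term :=
  .lam 0 (.app (.app tmFix
    (.lam 3 (.lam 7 (.app (.app (.app (.var 7) (.var 3)) (.var 3)) (.var 0)))))
    (.var 0))

/-! The Space LAM. -/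

structure LState where
  dump : List (Clo × List Clo)
  tm : Term
  env : Env
  stk : List Clo

inductive LAM : LState → LState → Prop
  | sea {D : List (Clo × List Clo)} {t u : Term} {e : Env} {S : List Clo} :
      LAM ⟨D, .app t u, e, S⟩ ⟨(.mk t (e.restrict t.fv), S) :: D, u, e.restrict u.fv, []⟩
  | ret {D : List (Clo × List Clo)} {u : Term} {e' : Env} {S : List Clo}
      {x : ℕ} {t : Term} {e : Env} :
      LAM ⟨(.mk u e', S) :: D, .lam x t, e, []⟩ ⟨D, u, e', .mk (.lam x t) e :: S⟩
  | betaw {D : List (Clo × List Clo)} {x : ℕ} {t : Term} {e : Env} {c : Clo} {S : List Clo} :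
      x ∉ t.fv → LAM ⟨D, .lam x t, e, c :: S⟩ ⟨D, t, e, S⟩
  | betanw {D : List (Clo × List Clo)} {x : ℕ} {t : Term} {e : Env} {c : Clo} {S : List Clo} :
      x ∈ t.fv → LAM ⟨D, .lam x t, e, c :: S⟩ ⟨D, t, .cons x c e, S⟩
  | sub {D : List (Clo × List Clo)} {x : ℕ} {e : Env} {u : Term} {e' : Env} {S : List Clo} :
      Env.lookup e x = some (.mk u e') → LAM ⟨D, .var x, e, S⟩ ⟨D, u, e', S⟩

def LFinal (ls : LState) : Prop := ∀ ls', ¬ LAM ls ls'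

/-- The Space KAM state `(t,e,S)` seen as the Space LAM state `(ε,t,e,S)`. -/
def embed (s : State) : LState := ⟨[], s.tm, s.env, s.stk⟩

def lInit (t : Term) : LState := ⟨[], t, .nil, []⟩

def LState.size (t0 : Term) (ls : LState) : ℕ :=
  (ls.dump.map (fun p => Clo.size t0 p.1 + stackSize t0 p.2)).sum +
    addrSize t0 ls.tm + Env.sizeE t0 ls.env + stackSize t0 ls.stk

/-- A LAM-sequence from `a` whose first state with empty dump after `a` is its target. -/
inductive LRunToEmpty : LState → LState → Prop
  | single {a b : LState} : LAM a b → b.dump = [] → LRunToEmpty a b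
  | cons {a b c : LState} : LAM a b → b.dump ≠ [] → LRunToEmpty b c → LRunToEmpty a c

/-! Log-sensitive Turing machines. -/

/-- Input-tape alphabet {0, 1, L, R}. -/
inductive ISym : Type | zero | one | lend | rend
deriving DecidableEq

/-- Work-tape alphabet {0, 1, □}. -/
inductive WSym : Type | zero | one | blank
deriving DecidableEq

/-- Head moves. -/
inductive Move : Type | L | R | N
deriving DecidableEq

/-- A log-sensitive Turing machine: states `Fin n`, initial state, final states
`qtrue = s1` and `qfalse = s0`, and a deterministic transition function reading the
current state and the two scanned symbols, writing on the work tape, moving both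
heads, and changing state (`none` = halt). -/
structure TM where
  n : ℕ
  start : Fin n
  qtrue : Fin n
  qfalse : Fin n
  δ : Fin n → ISym → WSym → Option (Fin n × WSym × Move × Move)

/-- A configuration: state, input-head position (on the tape `L i R`), and the
work tape split as (left part, reversed) / scanned symbol / (right part). -/
structure Config (M : TM) where
  q : Fin M.n
  ipos : ℕ
  wl : List WSym
  wcur : WSym
  wr : List WSym

/-- The symbol of the input tape `L i R` at a given position. -/
def inputAt (i : List Bool) (p : ℕ) : ISym :=
  if p = 0 then .lend
  else if h : p - 1 < i.length then (if i.get ⟨p - 1, h⟩ then .one else .zero)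
  else .rend

def moveIpos (p : ℕ) : Move → ℕ
  | .L => p - 1
  | .R => p + 1
  | .N => p

def moveWork (wl : List WSym) (c : WSym) (wr : List WSym) : Move → List WSym × WSym × List WSym
  | .L => match wl with
    | [] => ([], .blank, c :: wr)
    | a :: l => (l, a, c :: wr)
  | .R => match wr with
    | [] => (c :: wl, .blank, [])
    | a :: r => (c :: wl, a, r)
  | .N => (wl, c, wr)

/-- One transition of the TM `M` on input `i`. -/
def TMStep (M : TM) (i : List Bool) (c c' : Config M) : Prop :=
  ∃ q' w mi mw, M.δ c.q (inputAt i c.ipos) c.wcur = some (q', w, mi, mw) ∧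
    c'.q = q' ∧ c'.ipos = moveIpos c.ipos mi ∧
    (c'.wl, c'.wcur, c'.wr) = moveWork c.wl w c.wr mw

def initConfig (M : TM) : Config M := ⟨M.start, 0, [], .blank, []⟩

/-- Number of work-tape cells used by a configuration. -/
def Config.workSize {M : TM} (c : Config M) : ℕ := c.wl.length + 1 + c.wr.length

def TMFinal (M : TM) (i : List Bool) (c : Config M) : Prop := ∀ c', ¬ TMStep M i c c'

/-- `⟨1⟩ := λx.λy.x` and `⟨0⟩ := λx.λy.y`. -/
def encBool (b : Bool) : Term :=
  if b then .lam 0 (.lam 1 (.var 0)) else .lam 0 (.lam 1 (.var 1))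

/-!
Weak head reduction of `tn` substitutes into `C(i+1)⟨⋯⟩` the closed value `ai` that `xi`
receives, so each level costs one β-step and `tn` reaches `I` after `n + 2` of them. The
Naive KAM instead binds `x(i+1)` to the closure `Si = (x0 ⋯ xi, ei)`, which carries its
own copy of `ei`; as `e(i+1) = [x(i+1)←Si]·ei` contains `ei` twice, the number of closures
in `ei` doubles at every level, and the state reached before the last β-step holds `2^(n+2)`
closures.
-/

theorem NSteps.trans {α : Type _} {R : α → α → Prop} {m n : ℕ} {a b c : α}
    (hab : NSteps R m a b) (hbc : NSteps R n b c) : NSteps R (m + n) a c := by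
  induction hab with
  | refl => simpa using hbc
  | head hstep _ ih => simpa [Nat.add_right_comm] using NSteps.head hstep (ih hbc)

namespace Term

theorem subst_eq_self_of_notMem {x : ℕ} (u : Term) :
    ∀ {t : Term}, x ∉ t.fv → subst x u t = t
  | var y, h => by
    simp only [fv, Finset.mem_singleton] at h
    simp [subst, Ne.symm h]
  | lam y t, h => by
    by_cases hy : y = x
    · simp [subst, hy]
    · have ht : x ∉ t.fv := fun hx => h (by simp [fv, hx, Ne.symm hy])
      simp [subst, hy, subst_eq_self_of_notMem u ht]
  | app t r, h => by
    simp only [fv, Finset.mem_union, not_or] at h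
    simp [subst, subst_eq_self_of_notMem u h.1, subst_eq_self_of_notMem u h.2]

theorem subst_eq_self_of_fv_eq_empty {t : Term} (ht : t.fv = ∅) (x : ℕ) (u : Term) :
    subst x u t = t :=
  subst_eq_self_of_notMem u (by simp [ht])

end Term

def substUpTo (σ : ℕ → Term) : ℕ → Term → Term
  | 0, t => t
  | i + 1, t => Term.subst i (σ i) (substUpTo σ i t)

section substUpTo

variable (σ : ℕ → Term)

theorem substUpTo_of_fv_eq_empty {t : Term} (ht : t.fv = ∅) : ∀ i, substUpTo σ i t = t
  | 0 => rfl
  | i + 1 => by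
    rw [substUpTo, substUpTo_of_fv_eq_empty ht i, Term.subst_eq_self_of_fv_eq_empty ht]

theorem substUpTo_app (t u : Term) : ∀ i,
    substUpTo σ i (.app t u) = .app (substUpTo σ i t) (substUpTo σ i u)
  | 0 => rfl
  | i + 1 => by simp only [substUpTo, substUpTo_app t u i, Term.subst]

theorem substUpTo_lam {m : ℕ} (t : Term) : ∀ {i}, i ≤ m →
    substUpTo σ i (.lam m t) = .lam m (substUpTo σ i t)
  | 0, _ => rfl
  | i + 1, h => by
    rw [substUpTo, substUpTo_lam t (by omega), substUpTo]
    simp [Term.subst, show m ≠ i by omega]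

theorem substUpTo_var_of_le {m : ℕ} : ∀ {i}, i ≤ m → substUpTo σ i (.var m) = .var m
  | 0, _ => rfl
  | i + 1, h => by
    rw [substUpTo, substUpTo_var_of_le (by omega)]
    simp [Term.subst, show m ≠ i by omega]

theorem substUpTo_var_of_lt (hσ : ∀ j, (σ j).fv = ∅) {m : ℕ} :
    ∀ {i}, m < i → substUpTo σ i (.var m) = σ m
  | i + 1, h => by
    rcases Nat.lt_or_ge m i with hm | hm
    · rw [substUpTo, substUpTo_var_of_lt hσ hm, Term.subst_eq_self_of_fv_eq_empty (hσ m)]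
    · obtain rfl : m = i := by omega
      rw [substUpTo, substUpTo_var_of_le σ le_rfl]
      simp [Term.subst]

end substUpTo

/-- `Ci⟨C(i+1)⟨⋯C(i+k-1)⟨t⟩⋯⟩⟩`. -/
def nestFrom (i k : ℕ) (t : Term) : Term := (List.range' i k).foldr cPlug t

theorem nestFrom_succ (i k : ℕ) (t : Term) :
    nestFrom i (k + 1) t = cPlug i (nestFrom (i + 1) k t) := by
  simp [nestFrom, List.range'_succ]

theorem nest_eq_nestFrom (n : ℕ) (t : Term) : nest n t = nestFrom 0 (n + 1) t := by
  rw [nest, nestFrom, List.range_eq_range']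

theorem tN_eq_app_nestFrom (n : ℕ) : tN n = .app (nestFrom 0 (n + 1) (.lam 1 tmI)) tmI := by
  rw [tN, nest_eq_nestFrom]

/-! `argVal i` is the closed term `ai` that weak head reduction of `tn` substitutes for `xi`:
`a0 = I`, `a1 = a0 a0` and `a(k+2) = a0 ⋯ a(k+1)`. With `varsAppVal k = a0 ⋯ ak`, the identity
`a(k+2) = varsAppVal (k+1)` gives both families the closed forms below. -/

def varsAppVal : ℕ → Term
  | 0 => tmI
  | 1 => .app tmI (.app tmI tmI)
  | k + 2 => .app (varsAppVal (k + 1)) (varsAppVal (k + 1))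

def argVal : ℕ → Term
  | 0 => tmI
  | 1 => .app tmI tmI
  | k + 2 => varsAppVal (k + 1)

theorem varsAppVal_succ : ∀ k, varsAppVal (k + 1) = .app (varsAppVal k) (argVal (k + 1))
  | 0 => rfl
  | _ + 1 => rfl

theorem fv_tmI : tmI.fv = ∅ := by simp [tmI, Term.fv]

theorem fv_varsAppVal : ∀ k, (varsAppVal k).fv = ∅
  | 0 => fv_tmI
  | 1 => by simp [varsAppVal, Term.fv, fv_tmI]
  | k + 2 => by simp [varsAppVal, Term.fv, fv_varsAppVal (k + 1)]

theorem fv_argVal : ∀ k, (argVal k).fv = ∅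
  | 0 => fv_tmI
  | 1 => by simp [argVal, Term.fv, fv_tmI]
  | k + 2 => fv_varsAppVal (k + 1)

theorem substUpTo_varsApp : ∀ {k i : ℕ}, k < i → substUpTo argVal i (varsApp k) = varsAppVal k
  | 0, i, h => substUpTo_var_of_lt argVal fv_argVal h
  | k + 1, i, h => by
    rw [varsApp, substUpTo_app, substUpTo_varsApp (by omega),
      substUpTo_var_of_lt argVal fv_argVal h, varsAppVal_succ]

theorem substUpTo_sTerm : ∀ {k i : ℕ}, k < i → substUpTo argVal i (sTerm k) = argVal (k + 1)
  | 0, i, h => by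
    rw [sTerm, substUpTo_app, substUpTo_var_of_lt argVal fv_argVal h]
    rfl
  | k + 1, _, h => substUpTo_varsApp h

theorem whr_nestFrom (t : Term) : ∀ (k i : ℕ),
    NSteps Whr k (.app (substUpTo argVal i (nestFrom i k t)) (argVal i))
      (.app (substUpTo argVal (i + k) t) (argVal (i + k)))
  | 0, i => NSteps.refl _
  | k + 1, i => by
    have hβ : Whr (.app (.lam i (substUpTo argVal i (.app (nestFrom (i + 1) k t) (sTerm i))))
        (argVal i)) (substUpTo argVal (i + 1) (.app (nestFrom (i + 1) k t) (sTerm i))) :=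
      Whr.beta _ _ _
    rw [substUpTo_app argVal _ _ (i + 1), substUpTo_sTerm (Nat.lt_succ_self i),
      ← substUpTo_lam argVal _ le_rfl] at hβ
    rw [nestFrom_succ, cPlug, show i + (k + 1) = i + 1 + k by omega]
    exact NSteps.head hβ (whr_nestFrom t k (i + 1))

theorem whr_tN (n : ℕ) : NSteps Whr (n + 2) (tN n) tmI := by
  have hlast : Whr (.app (substUpTo argVal (n + 1) (.lam 1 tmI)) (argVal (n + 1))) tmI := by
    rw [substUpTo_of_fv_eq_empty argVal (by simp [Term.fv, fv_tmI])]
    simpa [Term.subst_eq_self_of_fv_eq_empty fv_tmI] using Whr.beta 1 tmI (argVal (n + 1))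
  have hnest := whr_nestFrom (.lam 1 tmI) (n + 1) 0
  rw [Nat.zero_add] at hnest
  rw [tN_eq_app_nestFrom]
  exact hnest.trans (.head hlast (.refl _))

theorem whNormal_tmI : WhNormal tmI := by
  intro u h
  cases h

theorem nk_nestFrom (t : Term) : ∀ (k i : ℕ),
    Relation.ReflTransGen NK ⟨nestFrom (i + 1) k t, eN i, [sClo i]⟩
      ⟨t, eN (i + k), [sClo (i + k)]⟩
  | 0, i => .refl
  | k + 1, i => by
    rw [nestFrom_succ, show i + (k + 1) = i + 1 + k by omega]
    exact .head (NK.beta _ _ _ _ _) (.head (NK.sea _ _ _ _) (nk_nestFrom t k (i + 1)))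

theorem nk_tN (n : ℕ) :
    Relation.ReflTransGen NK (initState (tN n)) ⟨.lam 1 tmI, eN n, [sClo n]⟩ := by
  rw [initState, tN_eq_app_nestFrom, nestFrom_succ]
  refine .head (NK.sea _ _ _ _) (.head (NK.beta _ _ _ _ _) (.head (NK.sea _ _ _ _) ?_))
  change Relation.ReflTransGen NK ⟨nestFrom 1 n _, eN 0, [sClo 0]⟩ _
  simpa only [Nat.zero_add] using nk_nestFrom (.lam 1 tmI) n 0

theorem count_eN_add_one : ∀ n, Env.count (eN n) + 1 = 2 ^ (n + 1)
  | 0 => rfl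
  | n + 1 => by
    have ih := count_eN_add_one n
    simp only [eN, Env.count, Clo.count] at ih ⊢
    rw [pow_succ]
    omega

theorem count_eN_sClo (t : Term) (n : ℕ) : State.count ⟨t, eN n, [sClo n]⟩ = 2 ^ (n + 2) := by
  have h := count_eN_add_one n
  simp only [State.count, sClo, List.map_cons, List.map_nil, List.sum_singleton, Clo.count]
  rw [pow_succ]
  omega

/-- Naive KAM abstract-time overhead explosion on
`tn := C0⟨C1⟨⋯Cn⟨λy.I⟩⋯⟩⟩ I`: the complete weak-head evaluation takes `Θ(n)`
β-steps, while the Naive KAM run reaches a state of closure count at least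
`2^n`. -/
theorem naive_kam_time_explosion :
    ∃ k1 k2 : ℕ, 0 < k1 ∧ 0 < k2 ∧ ∀ n : ℕ,
      (∃ p : ℕ, k1 * (n + 1) ≤ p ∧ p ≤ k2 * (n + 1) ∧
        NSteps Whr p (tN n) tmI ∧ WhNormal tmI) ∧
      (∃ st : State, Relation.ReflTransGen NK (initState (tN n)) st ∧
        2 ^ n ≤ st.count) := by
  refine ⟨1, 2, one_pos, two_pos, fun n => ⟨?_, ?_⟩⟩
  · exact ⟨n + 2, by omega, by omega, whr_tN n, whNormal_tmI⟩
  · refine ⟨_, nk_tN n, ?_⟩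
    rw [count_eN_sClo]
    exact Nat.pow_le_pow_right two_pos (by omega)
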